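/- arXiv:1912.12323 — 5 statements merged into one kernel-verified Lean document; each statement's English description precedes it below -/
import Mathlib

section
/- Let A ⊆ ℝ be a quasicrystal that is a multiplicative submonoid of ℝ containing 0, 1 and −1, and let 𝔞, 𝔟 ⊆ A be quasicrystalline ideals of A (quasicrystals that are multiplicative submonoids with A·𝔞 ⊆ 𝔞 and A·𝔟 ⊆ 𝔟), both different from {0}. Then the product set 𝔞·𝔟 := {αβ : α ∈ 𝔞, β ∈ 𝔟} is again a quasicrystal. -/
open Pointwise

/-- A subset of `ℝ` is uniformly discrete if some `r > 0` separates distinct points. -/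
def UniformlyDiscreteR (Λ : Set ℝ) : Prop :=
  ∃ r > 0, ∀ x ∈ Λ, ∀ y ∈ Λ, x ≠ y → r ≤ |x - y|

/-- A subset of `ℝ` is relatively dense if every ball of some fixed radius `R` meets it. -/
def RelativelyDenseR (Λ : Set ℝ) : Prop :=
  ∃ R > 0, ∀ v : ℝ, ∃ x ∈ Λ, |v - x| < R

/-- A quasicrystal (in the sense of Meyer) in `ℝ`: a Delaunay set `Λ` such that
`Λ - Λ ⊆ Λ + F` for some finite set `F`. -/
def IsQuasicrystalR (Λ : Set ℝ) : Prop :=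
  UniformlyDiscreteR Λ ∧ RelativelyDenseR Λ ∧ ∃ F : Finset ℝ, Λ - Λ ⊆ Λ + (F : Set ℝ)

/-- A uniformly discrete subset of `ℝ` meets any compact interval in a finite set. -/
lemma ud_inter_finite {Λ : Set ℝ} (h : UniformlyDiscreteR Λ) (a b : ℝ) :
    (Λ ∩ Set.Icc a b).Finite := by
  obtain ⟨r, hr, hsep⟩ := h
  have hinj : Set.InjOn (fun x => ⌊x / r⌋) (Λ ∩ Set.Icc a b) := by
    intro x hx y hy hxy
    by_contra hne
    have h1 := hsep x hx.1 y hy.1 hne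
    have hx1 : (⌊x / r⌋ : ℝ) ≤ x / r := Int.floor_le _
    have hx2 : x / r < ⌊x / r⌋ + 1 := Int.lt_floor_add_one _
    have hy1 : (⌊y / r⌋ : ℝ) ≤ y / r := Int.floor_le _
    have hy2 : y / r < ⌊y / r⌋ + 1 := Int.lt_floor_add_one _
    simp only at hxy
    rw [hxy] at hx1 hx2
    have habs : |x / r - y / r| < 1 := abs_sub_lt_iff.2 ⟨by linarith, by linarith⟩
    rw [← sub_div, abs_div, abs_of_pos hr, div_lt_one hr] at habs
    linarith
  have himg : (fun x => ⌊x / r⌋) '' (Λ ∩ Set.Icc a b) ⊆ Set.Icc ⌊a / r⌋ ⌊b / r⌋ := by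
    rintro _ ⟨x, hx, rfl⟩
    refine ⟨Int.floor_le_floor (by gcongr; exact hx.2.1), Int.floor_le_floor (by gcongr; exact hx.2.2)⟩
  exact Set.Finite.of_finite_image ((Set.finite_Icc _ _).subset himg) hinj

/-- If `A ⊆ ℝ` is a quasicrystal which is a multiplicative submonoid containing `0, 1, -1`,
and `𝔞, 𝔟 ⊆ A` are nonzero quasicrystalline ideals of `A`, then the product set
`𝔞·𝔟 = {αβ : α ∈ 𝔞, β ∈ 𝔟}` is again a quasicrystal. -/
theorem stmt1 (A 𝔞 𝔟 : Set ℝ)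
    (hA : IsQuasicrystalR A)
    (hA0 : (0 : ℝ) ∈ A) (hA1 : (1 : ℝ) ∈ A) (hAm1 : (-1 : ℝ) ∈ A)
    (hAmul : ∀ x ∈ A, ∀ y ∈ A, x * y ∈ A)
    (h𝔞A : 𝔞 ⊆ A) (h𝔟A : 𝔟 ⊆ A)
    (h𝔞qc : IsQuasicrystalR 𝔞) (h𝔟qc : IsQuasicrystalR 𝔟)
    (h𝔞mul : ∀ x ∈ 𝔞, ∀ y ∈ 𝔞, x * y ∈ 𝔞) (h𝔟mul : ∀ x ∈ 𝔟, ∀ y ∈ 𝔟, x * y ∈ 𝔟)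
    (h𝔞id : ∀ a ∈ A, ∀ x ∈ 𝔞, a * x ∈ 𝔞) (h𝔟id : ∀ a ∈ A, ∀ x ∈ 𝔟, a * x ∈ 𝔟)
    (h𝔞ne : 𝔞 ≠ {0}) (h𝔟ne : 𝔟 ≠ {0}) :
    IsQuasicrystalR (𝔞 * 𝔟) := by
  set P : Set ℝ := 𝔞 * 𝔟 with hP
  -- the product set is contained in 𝔞
  have hPsub : P ⊆ 𝔞 := by
    rintro _ ⟨x, hx, y, hy, rfl⟩
    show x * y ∈ 𝔞
    rw [mul_comm]
    exact h𝔞id y (h𝔟A hy) x hx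
  -- a nonzero element of 𝔟
  obtain ⟨Rb, hRb, hdb⟩ := h𝔟qc.2.1
  obtain ⟨c, hc𝔟, hc⟩ := hdb (Rb + 1)
  have hc1 : 1 < c := by
    rcases abs_sub_lt_iff.1 hc with ⟨h1, h2⟩; linarith
  have hc0 : 0 < c := lt_trans one_pos hc1
  -- uniform discreteness
  have hPud : UniformlyDiscreteR P := by
    obtain ⟨r, hr, hsep⟩ := h𝔞qc.1
    exact ⟨r, hr, fun x hx y hy hxy => hsep x (hPsub hx) y (hPsub hy) hxy⟩
  -- relative density, with radius R' = c * R
  obtain ⟨R, hR, hda⟩ := h𝔞qc.2.1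
  have hPd : ∀ v : ℝ, ∃ x ∈ P, |v - x| < c * R := by
    intro v
    obtain ⟨x, hx, hxv⟩ := hda (v / c)
    refine ⟨x * c, Set.mul_mem_mul hx hc𝔟, ?_⟩
    have : v - x * c = c * (v / c - x) := by
      field_simp
    rw [this, abs_mul, abs_of_pos hc0]
    exact (mul_lt_mul_iff_right₀ hc0).2 hxv
  have hR' : 0 < c * R := mul_pos hc0 hR
  refine ⟨hPud, ⟨c * R, hR', hPd⟩, ?_⟩
  -- Meyer condition
  obtain ⟨F, hF⟩ := h𝔞qc.2.2
  -- P - P - P ⊆ 𝔞 + F + F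
  have hsub3 : P - P - P ⊆ 𝔞 + (F : Set ℝ) + (F : Set ℝ) := by
    rintro _ ⟨_, ⟨p1, hp1, p2, hp2, rfl⟩, p3, hp3, rfl⟩
    obtain ⟨a1, ha1, f1, hf1, he1⟩ := hF (Set.sub_mem_sub (hPsub hp1) (hPsub hp2))
    obtain ⟨a2, ha2, f2, hf2, he2⟩ := hF (Set.sub_mem_sub ha1 (hPsub hp3))
    refine ⟨a2 + f2, ⟨a2, ha2, f2, hf2, rfl⟩, f1, hf1, ?_⟩
    have he1' : a1 + f1 = p1 - p2 := he1
    have he2' : a2 + f2 = a1 - p3 := he2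
    show a2 + f2 + f1 = p1 - p2 - p3
    linarith
  -- a bound on F
  have hBdd : BddAbove ((fun f : ℝ => |f|) '' (F : Set ℝ)) :=
    (F.finite_toSet.image _).bddAbove
  obtain ⟨B, hB⟩ := hBdd
  have hBf : ∀ f ∈ (F : Set ℝ), |f| ≤ B := fun f hf => hB ⟨f, hf, rfl⟩
  -- the finite set of translations
  set D : Set ℝ := (P - P - P) ∩ Set.Icc (-(c * R)) (c * R) with hD
  have hDfin : D.Finite := by
    have hDsub : D ⊆ (𝔞 ∩ Set.Icc (-(c * R + 2 * B)) (c * R + 2 * B))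
        + (F : Set ℝ) + (F : Set ℝ) := by
      rintro d ⟨hd1, hd2⟩
      obtain ⟨w, ⟨a, ha, f2, hf2, rfl⟩, f1, hf1, hw⟩ := hsub3 hd1
      have hw' : a + f2 + f1 = d := hw
      have h2 := abs_le.1 (hBf f2 hf2)
      have h1 := abs_le.1 (hBf f1 hf1)
      rw [Set.mem_Icc] at hd2
      exact ⟨a + f2, ⟨a, ⟨ha, Set.mem_Icc.2 ⟨by linarith, by linarith⟩⟩, f2, hf2, rfl⟩,
        f1, hf1, hw⟩
    exact Set.Finite.subset (((ud_inter_finite h𝔞qc.1 _ _).add F.finite_toSet).add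
      F.finite_toSet) hDsub
  refine ⟨hDfin.toFinset, ?_⟩
  rintro d hd
  obtain ⟨p, hp, hdp⟩ := hPd d
  have hdmem : d - p ∈ D :=
    ⟨Set.sub_mem_sub hd hp, Set.mem_Icc.2 (abs_le.1 hdp.le)⟩
  have : p + (d - p) ∈ P + (hDfin.toFinset : Set ℝ) :=
    Set.add_mem_add hp (by rwa [Set.Finite.coe_toFinset])
  simpa using this
end

section
/- (1) For every x ∈ ℝ^{r+s−1}, the model ideal 𝔞_x = 𝔞_{O_K,x} is not invertible: there is no subset 𝔟 ⊆ K whose image under σ is a quasicrystal and which satisfies A_σ·𝔟 ⊆ 𝔟, such that 𝔞_x·𝔟 := {αβ : α ∈ 𝔞_x, β ∈ 𝔟} = A_σ; consequently the class of 𝔞_x is not invertible in the monoid of classes of fractional quasicrystalline ideals modulo scaling by K^×. (2) If there exists a unit α ∈ O_K^× with |σ_i(α)| = |σ_i(u)|^{x_i} for all i = 1,…,r+s−1, then 𝔞̄_x·𝔞̄_{−x} = A_σ, so the class of 𝔞̄_x is invertible with inverse the class of 𝔞̄_{−x}. -/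
/-!
Part (1): if `α * β = 1` with `α ∈ 𝔞_x`, then, the conditions defining `𝔞_x` being strict and
`|σ_i(u)| < 1`, for `N` large both `α (1 + u^N)` and `α (1 - u^N)` still lie in `𝔞_x`. By the
parallelogram law one of `γ = 1 ± u^N` has `|σ_i(γ)| > 1` at some place `σ_i ≠ σ` (which exists
because `u` has infinite order), so `αγ · β = γ` lies in `𝔞_x · 𝔟` but not in `A_σ`.

Part (2): `|σ_i(u)|^{x_i} |σ_i(u)|^{-x_i} = 1` gives `𝔞̄_x 𝔞̄_{-x} ⊆ A_σ`, and every `γ ∈ A_σ`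
factors as `α · α⁻¹γ` with the given unit `α ∈ 𝔞̄_x` and `α⁻¹γ ∈ 𝔞̄_{-x}`.
-/

open NumberField Pointwise
open scoped nonZeroDivisors

/-- A subset of `ℂ` is uniformly discrete if some `r > 0` separates distinct points. -/
def UniformlyDiscreteC (Λ : Set ℂ) : Prop :=
  ∃ r > 0, ∀ x ∈ Λ, ∀ y ∈ Λ, x ≠ y → r ≤ ‖x - y‖

/-- A subset of `ℂ` is relatively dense in `S` if every point of `S` is within a fixed
distance `R` of the set. -/
def RelativelyDenseIn (S Λ : Set ℂ) : Prop :=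
  ∃ R > 0, ∀ v ∈ S, ∃ x ∈ Λ, ‖v - x‖ < R

/-- A quasicrystal (in the sense of Meyer) in the completion `S` of the embedded field:
a Delaunay set `Λ` with `Λ - Λ ⊆ Λ + F` for some finite set `F`. -/
def IsQuasicrystalIn (S Λ : Set ℂ) : Prop :=
  UniformlyDiscreteC Λ ∧ RelativelyDenseIn S Λ ∧ ∃ F : Finset ℂ, Λ - Λ ⊆ Λ + (F : Set ℂ)

variable (K : Type*) [Field K] [NumberField K] (σ : InfinitePlace K)

/-- A Pisot–Vijayaraghavan unit: a unit of infinite order whose absolute values at all the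
places other than `σ` are `< 1`. -/
def IsPVUnit (u : (𝓞 K)ˣ) : Prop :=
  (¬ IsOfFinOrder u) ∧ ∀ w : InfinitePlace K, w ≠ σ → w ((u : 𝓞 K) : K) < 1

/-- The model ideal `𝔞^⋆_{𝔄,x}` associated to a fractional ideal `𝔄`, exponent vector `x` and
strictness data `b` (`b w = true` means `≤`, `b w = false` means `<`). -/
def modelSet (u : (𝓞 K)ˣ) (𝔄 : FractionalIdeal (𝓞 K)⁰ K)
    (x : {w : InfinitePlace K // w ≠ σ} → ℝ) (b : {w : InfinitePlace K // w ≠ σ} → Bool) :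
    Set K :=
  {α : K | α ∈ 𝔄 ∧ ∀ w : {w : InfinitePlace K // w ≠ σ},
      if b w then (w : InfinitePlace K) α ≤ ((w : InfinitePlace K) ((u : 𝓞 K) : K)) ^ (x w)
      else (w : InfinitePlace K) α < ((w : InfinitePlace K) ((u : 𝓞 K) : K)) ^ (x w)}

/-- The quasicrystalline ring `A_σ` as a subset of `K`. -/
def AqcSet : Set K :=
  {α : K | (∃ a : 𝓞 K, (a : K) = α) ∧ ∀ w : InfinitePlace K, w ≠ σ → w α ≤ 1}

section

variable {K} {σ}

omit [NumberField K]

theorem mem_modelSet_const_false {u : (𝓞 K)ˣ} {𝔄 : FractionalIdeal (𝓞 K)⁰ K}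
    {x : {w : InfinitePlace K // w ≠ σ} → ℝ} {α : K} :
    α ∈ modelSet K σ u 𝔄 x (fun _ => false) ↔ α ∈ 𝔄 ∧
      ∀ w : {w : InfinitePlace K // w ≠ σ},
        (w : InfinitePlace K) α < (w : InfinitePlace K) ((u : 𝓞 K) : K) ^ x w := by
  simp [modelSet]

theorem mem_modelSet_const_true {u : (𝓞 K)ˣ} {𝔄 : FractionalIdeal (𝓞 K)⁰ K}
    {x : {w : InfinitePlace K // w ≠ σ} → ℝ} {α : K} :
    α ∈ modelSet K σ u 𝔄 x (fun _ => true) ↔ α ∈ 𝔄 ∧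
      ∀ w : {w : InfinitePlace K // w ≠ σ},
        (w : InfinitePlace K) α ≤ (w : InfinitePlace K) ((u : 𝓞 K) : K) ^ x w := by
  simp [modelSet]

theorem one_mem_aqcSet : (1 : K) ∈ AqcSet K σ :=
  ⟨⟨1, map_one _⟩, fun w _ => (map_one w).le⟩

theorem mul_mem_one {α β : K} (hα : α ∈ (1 : FractionalIdeal (𝓞 K)⁰ K))
    (hβ : β ∈ (1 : FractionalIdeal (𝓞 K)⁰ K)) : α * β ∈ (1 : FractionalIdeal (𝓞 K)⁰ K) := by
  simpa using FractionalIdeal.mul_mem_mul hα hβ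

theorem modelSet_mul_modelSet_neg_subset_aqcSet (u : (𝓞 K)ˣ)
    (x : {w : InfinitePlace K // w ≠ σ} → ℝ) :
    modelSet K σ u 1 x (fun _ => true) * modelSet K σ u 1 (-x) (fun _ => true) ⊆
      AqcSet K σ := by
  rintro _ ⟨a, ha, c, hc, rfl⟩
  rw [mem_modelSet_const_true] at ha hc
  refine ⟨(FractionalIdeal.mem_one_iff _).mp (mul_mem_one ha.1 hc.1), fun w hw => ?_⟩
  have hu : 0 < w ((u : 𝓞 K) : K) := InfinitePlace.pos_iff.mpr (by simp)
  calc w (a * c) = w a * w c := map_mul w a c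
    _ ≤ w ((u : 𝓞 K) : K) ^ x ⟨w, hw⟩ * w ((u : 𝓞 K) : K) ^ (-x) ⟨w, hw⟩ :=
      mul_le_mul (ha.2 ⟨w, hw⟩) (hc.2 ⟨w, hw⟩) (apply_nonneg _ _) (by positivity)
    _ = 1 := by rw [Pi.neg_apply, ← Real.rpow_add hu, add_neg_cancel, Real.rpow_zero]

theorem aqcSet_subset_modelSet_mul_modelSet_neg {u α : (𝓞 K)ˣ}
    {x : {w : InfinitePlace K // w ≠ σ} → ℝ}
    (hα : ∀ w : {w : InfinitePlace K // w ≠ σ},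
      (w : InfinitePlace K) ((α : 𝓞 K) : K) = (w : InfinitePlace K) ((u : 𝓞 K) : K) ^ x w) :
    AqcSet K σ ⊆
      modelSet K σ u 1 x (fun _ => true) * modelSet K σ u 1 (-x) (fun _ => true) := by
  rintro _ ⟨⟨g, rfl⟩, hg⟩
  refine ⟨(α : K),
    mem_modelSet_const_true.mpr ⟨FractionalIdeal.coe_mem_one _ _, fun w => (hα w).le⟩,
    ((α⁻¹ * g : 𝓞 K) : K),
    mem_modelSet_const_true.mpr ⟨FractionalIdeal.coe_mem_one _ _, fun w => ?_⟩, by simp⟩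
  have hu : 0 < (w : InfinitePlace K) ((u : 𝓞 K) : K) := InfinitePlace.pos_iff.mpr (by simp)
  calc (w : InfinitePlace K) ((α⁻¹ * g : 𝓞 K) : K)
      = ((w : InfinitePlace K) ((α : 𝓞 K) : K))⁻¹ * (w : InfinitePlace K) g := by simp
    _ ≤ ((w : InfinitePlace K) ((α : 𝓞 K) : K))⁻¹ * 1 := by
      gcongr
      exact hg w.1 w.2
    _ = (w : InfinitePlace K) ((u : 𝓞 K) : K) ^ (-x) w := by
      rw [mul_one, hα w, Pi.neg_apply, Real.rpow_neg hu.le]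

end

section

variable {K} {σ}

theorem exists_ne_of_not_isOfFinOrder {u : (𝓞 K)ˣ} (hu : ¬ IsOfFinOrder u) :
    ∃ w : InfinitePlace K, w ≠ σ := by
  by_contra! h
  have hlog : Units.logEmbedding K (Additive.ofMul u) = 0 := by
    ext ⟨w, hw⟩
    exact absurd ((h w).trans (h Units.dirichletUnitTheorem.w₀).symm) hw
  rw [Units.dirichletUnitTheorem.logEmbedding_eq_zero_iff] at hlog
  exact hu hlog

theorem NumberField.InfinitePlace.one_lt_apply_one_add_or_one_sub (w : InfinitePlace K) {z : K}
    (hz : z ≠ 0) : 1 < w (1 + z) ∨ 1 < w (1 - z) := by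
  have h := parallelogram_law_with_norm ℝ (w.embedding 1) (w.embedding z)
  rw [← map_add, ← map_sub] at h
  simp only [InfinitePlace.norm_embedding_eq] at h
  rw [map_one] at h
  have hz : 0 < w z := InfinitePlace.pos_iff.mpr hz
  by_contra! ⟨h₁, h₂⟩
  nlinarith [apply_nonneg w (1 + z), apply_nonneg w (1 - z)]

theorem exists_apply_lt_and_one_lt_apply {u : 𝓞 K} (hu₀ : u ≠ 0) (hu : ∀ w ≠ σ, w (u : K) < 1)
    (ρ : {w : InfinitePlace K // w ≠ σ} → ℝ) (hρ : ∀ w, 1 < ρ w) (w₁ : InfinitePlace K) :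
    ∃ γ : 𝓞 K, (∀ w : {w : InfinitePlace K // w ≠ σ}, (w : InfinitePlace K) γ < ρ w) ∧
      1 < w₁ γ := by
  obtain ⟨N, hN⟩ : ∃ N : ℕ, ∀ w : {w : InfinitePlace K // w ≠ σ},
      (w : InfinitePlace K) (u : K) ^ N < ρ w - 1 :=
    (Filter.eventually_all.mpr fun w =>
      (tendsto_pow_atTop_nhds_zero_of_lt_one (apply_nonneg _ _) (hu w.1 w.2)).eventually
        (gt_mem_nhds (sub_pos.mpr (hρ w)))).exists
  set z : K := (u : K) ^ N
  have hz : z ≠ 0 := pow_ne_zero N (RingOfIntegers.coe_ne_zero_iff.mpr hu₀)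
  have hbound : ∀ γ : 𝓞 K, (γ : K) = 1 + z ∨ (γ : K) = 1 - z →
      ∀ w : {w : InfinitePlace K // w ≠ σ}, (w : InfinitePlace K) γ < ρ w := by
    rintro γ hγ ⟨w, hw⟩
    have hle : w γ ≤ 1 + w z := by
      rcases hγ with hγ | hγ <;> rw [hγ, ← map_one w]
      · exact w.1.add_le 1 z
      · exact w.1.sub_le_add 1 z
    have := hN ⟨w, hw⟩
    rw [← map_pow] at this
    dsimp only
    linarith
  rcases w₁.one_lt_apply_one_add_or_one_sub hz with h | h
  · exact ⟨1 + u ^ N, hbound _ (.inl (by push_cast; rfl)), by push_cast; exact h⟩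
  · exact ⟨1 - u ^ N, hbound _ (.inr (by push_cast; rfl)), by push_cast; exact h⟩

theorem modelSet_mul_ne_aqcSet {u : (𝓞 K)ˣ} (hu : IsPVUnit K σ u)
    (x : {w : InfinitePlace K // w ≠ σ} → ℝ) (𝔟 : Set K) :
    modelSet K σ u 1 x (fun _ => false) * 𝔟 ≠ AqcSet K σ := by
  intro h
  obtain ⟨w₁, hw₁⟩ := exists_ne_of_not_isOfFinOrder (σ := σ) hu.1
  obtain ⟨α, hα, β, hβ, hαβ : α * β = 1⟩ :
      (1 : K) ∈ modelSet K σ u 1 x (fun _ => false) * 𝔟 := h ▸ one_mem_aqcSet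
  rw [mem_modelSet_const_false] at hα
  have hα₀ : ∀ w : InfinitePlace K, 0 < w α :=
    fun w => InfinitePlace.pos_iff.mpr (left_ne_zero_of_mul_eq_one hαβ)
  obtain ⟨γ, hγ, hγ₁⟩ := exists_apply_lt_and_one_lt_apply u.ne_zero hu.2
    (fun w => (w : InfinitePlace K) ((u : 𝓞 K) : K) ^ x w / (w : InfinitePlace K) α)
    (fun w => (one_lt_div (hα₀ w)).mpr (hα.2 w)) w₁
  have hαγ : α * γ ∈ modelSet K σ u 1 x (fun _ => false) := by
    refine mem_modelSet_const_false.mpr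
      ⟨mul_mem_one hα.1 (FractionalIdeal.coe_mem_one _ γ), fun w => ?_⟩
    rw [map_mul, ← lt_div_iff₀' (hα₀ w)]
    exact hγ w
  have hγA : α * γ * β ∈ AqcSet K σ := h ▸ Set.mul_mem_mul hαγ hβ
  rw [mul_right_comm, hαβ, one_mul] at hγA
  exact (hγA.2 w₁ hw₁).not_gt hγ₁

end

/-- (1) The model ideals `𝔞_x = 𝔞_{O_K,x}` are never invertible: there is no quasicrystalline
fractional ideal `𝔟` with `𝔞_x·𝔟 = A_σ`.  (2) If there is a unit `α` with
`|σ_i(α)| = |σ_i(u)|^{x_i}` for all `i`, then `𝔞̄_x · 𝔞̄_{-x} = A_σ`, so the class of `𝔞̄_x`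
is invertible with inverse the class of `𝔞̄_{-x}`. -/
theorem stmt2 (u : (𝓞 K)ˣ) (hu : IsPVUnit K σ u) :
    (∀ x : {w : InfinitePlace K // w ≠ σ} → ℝ,
      ¬ ∃ 𝔟 : Set K,
          IsQuasicrystalIn (closure (Set.range σ.embedding)) (σ.embedding '' 𝔟) ∧
          (∀ a ∈ AqcSet K σ, ∀ b ∈ 𝔟, a * b ∈ 𝔟) ∧
          modelSet K σ u 1 x (fun _ => false) * 𝔟 = AqcSet K σ) ∧
    (∀ x : {w : InfinitePlace K // w ≠ σ} → ℝ,
      (∃ α : (𝓞 K)ˣ, ∀ w : {w : InfinitePlace K // w ≠ σ},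
          (w : InfinitePlace K) (((α : 𝓞 K)) : K)
            = ((w : InfinitePlace K) ((u : 𝓞 K) : K)) ^ (x w)) →
      modelSet K σ u 1 x (fun _ => true) * modelSet K σ u 1 (-x) (fun _ => true)
        = AqcSet K σ) := by
  refine ⟨fun x ⟨𝔟, _, _, h⟩ => modelSet_mul_ne_aqcSet hu x 𝔟 h, fun x ⟨α, hα⟩ => ?_⟩
  exact (modelSet_mul_modelSet_neg_subset_aqcSet u x).antisymm
    (aqcSet_subset_modelSet_mul_modelSet_neg hα)
end

section
/- The map sending a model ideal 𝔞 to the fractional O_K-ideal 𝔞O_K it generates induces a well-defined surjective homomorphism of monoids Φ : Cl^mod(A_σ) → Cl(K), where Cl(K) is the ideal class group of K (in particular, for model ideals 𝔞, 𝔟 the ideal (𝔞 * 𝔟)O_K equals the product ideal (𝔞O_K)(𝔟O_K) up to a principal factor), and the kernel of Φ, i.e. the preimage of the trivial ideal class, is exactly the submonoid Z of classes of the model ideals 𝔞^⋆_{O_K,x}. -/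
open NumberField Pointwise
open scoped nonZeroDivisors

variable (K : Type*) [Field K] [NumberField K] (σ : InfinitePlace K)

/-- The data of a model ideal: an (invertible) fractional ideal `𝔄`, an exponent vector `x`,
and strictness data `b` for the smallest window (`b w = true` means `≤`, `false` means `<`). -/
structure MIData (K : Type*) [Field K] [NumberField K] (σ : InfinitePlace K) where
  I : (FractionalIdeal (𝓞 K)⁰ K)ˣ
  x : {w : InfinitePlace K // w ≠ σ} → ℝ
  b : {w : InfinitePlace K // w ≠ σ} → Bool

/-- The model ideal `𝔞^⋆_{𝔄,x}` as a subset of `K`. -/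
def MIData.set (u : (𝓞 K)ˣ) (d : MIData K σ) : Set K :=
  {α : K | α ∈ (d.I : FractionalIdeal (𝓞 K)⁰ K) ∧ ∀ w : {w : InfinitePlace K // w ≠ σ},
      if d.b w then (w : InfinitePlace K) α ≤ ((w : InfinitePlace K) ((u : 𝓞 K) : K)) ^ (d.x w)
      else (w : InfinitePlace K) α < ((w : InfinitePlace K) ((u : 𝓞 K) : K)) ^ (d.x w)}

/-- The star product of model ideals: the product of the fractional ideals together with the
product of the windows (a product of intervals is closed exactly when both factors are). -/
noncomputable def MIData.star (d e : MIData K σ) : MIData K σ :=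
  ⟨d.I * e.I, d.x + e.x, fun w => d.b w && e.b w⟩

/-- Two model ideals are equivalent when they differ by scaling by an element of `K^×`. -/
def MIEquiv (u : (𝓞 K)ˣ) (d e : MIData K σ) : Prop :=
  ∃ γ : Kˣ, γ • d.set K σ u = e.set K σ u

/-!
Since `|σ_i(u)| < 1` away from `σ`, multiplying any `α ∈ 𝔄` by a high power of the unit `u`
pushes it into every window, so a model ideal generates its whole fractional ideal `𝔄` over
`O_K`. Hence `Φ` is just `(𝔄, window) ↦ [𝔄]`, which is multiplicative and clearly surjective.
Scaling by `γ ∈ K^×` replaces `𝔄` by `γ𝔄` and shifts the exponents by `log_{|σ_i(u)|} |σ_i(γ)|`;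
so `Φ` is constant on scaling classes, and a model ideal over a principal `𝔄 = (g)` is the
`g`-scaling of one over `O_K`, which identifies the kernel with `Z`.
-/

section ClassGroup

variable {R K : Type*} [CommRing R] [IsDomain R] [Field K] [Algebra R K] [IsFractionRing R K]

theorem ClassGroup.mk_eq_one_iff_exists_toPrincipalIdeal {I : (FractionalIdeal R⁰ K)ˣ} :
    ClassGroup.mk K I = 1 ↔ ∃ γ : Kˣ, toPrincipalIdeal R K γ = I := by
  rw [← MonoidHom.mem_range, mem_principal_ideals_iff, ClassGroup.mk_eq_one_iff]
  constructor
  · rintro ⟨⟨x, hx⟩⟩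
    exact ⟨x, FractionalIdeal.coeToSubmodule_injective (by
      simp only [FractionalIdeal.coe_spanSingleton, hx])⟩
  · rintro ⟨x, hx⟩
    exact ⟨⟨x, by rw [← hx, FractionalIdeal.coe_spanSingleton]⟩⟩

theorem ClassGroup.mk_toPrincipalIdeal (γ : Kˣ) :
    ClassGroup.mk K (toPrincipalIdeal R K γ) = 1 :=
  ClassGroup.mk_eq_one_iff_exists_toPrincipalIdeal.mpr ⟨γ, rfl⟩

end ClassGroup

namespace MIData

variable {K σ}

theorem exists_pow_smul_mem_set {u : (𝓞 K)ˣ}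
    (hu : ∀ w : InfinitePlace K, w ≠ σ → w ((u : 𝓞 K) : K) < 1) (d : MIData K σ) {α : K}
    (hα : α ∈ (d.I : FractionalIdeal (𝓞 K)⁰ K)) : ∃ n : ℕ, u ^ n • α ∈ d.set K σ u := by
  have hu0 : ((u : 𝓞 K) : K) ≠ 0 := by exact_mod_cast u.ne_zero
  have hsmall : ∀ᶠ n : ℕ in Filter.atTop, ∀ w : {w : InfinitePlace K // w ≠ σ},
      (w : InfinitePlace K) (u ^ n • α) < ((w : InfinitePlace K) ((u : 𝓞 K) : K)) ^ (d.x w) := by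
    refine Filter.eventually_all.mpr fun w => ?_
    have hlim : Filter.Tendsto
        (fun n : ℕ => (w : InfinitePlace K) (u ^ n • α)) Filter.atTop (nhds 0) := by
      simpa [Units.smul_def, Algebra.smul_def] using
        (tendsto_pow_atTop_nhds_zero_of_lt_one (apply_nonneg _ _) (hu w w.2)).mul_const
          ((w : InfinitePlace K) α)
    exact hlim.eventually_lt_const (Real.rpow_pos_of_pos (InfinitePlace.pos_iff.mpr hu0) _)
  obtain ⟨n, hn⟩ := hsmall.exists
  refine ⟨n, ?_, fun w => ?_⟩
  · exact Submodule.smul_of_tower_mem _ _ hα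
  · split
    · exact (hn w).le
    · exact hn w

theorem span_set {u : (𝓞 K)ˣ} (hu : ∀ w : InfinitePlace K, w ≠ σ → w ((u : 𝓞 K) : K) < 1)
    (d : MIData K σ) :
    Submodule.span (𝓞 K) (d.set K σ u)
      = ((d.I : FractionalIdeal (𝓞 K)⁰ K) : Submodule (𝓞 K) K) := by
  refine le_antisymm (Submodule.span_le.mpr fun α hα => hα.1) fun α hα => ?_
  obtain ⟨n, hn⟩ := d.exists_pow_smul_mem_set hu hα
  rw [← inv_smul_smul (u ^ n) α]
  exact Submodule.smul_of_tower_mem _ _ (Submodule.subset_span hn)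

theorem I_eq_of_set_eq {u : (𝓞 K)ˣ}
    (hu : ∀ w : InfinitePlace K, w ≠ σ → w ((u : 𝓞 K) : K) < 1) {d e : MIData K σ}
    (h : d.set K σ u = e.set K σ u) : d.I = e.I :=
  Units.ext <| FractionalIdeal.coeToSubmodule_injective <| by
    dsimp only
    rw [← d.span_set hu, h, e.span_set hu]

theorem span_star_set {u : (𝓞 K)ˣ}
    (hu : ∀ w : InfinitePlace K, w ≠ σ → w ((u : 𝓞 K) : K) < 1) (d e : MIData K σ) :
    Submodule.span (𝓞 K) ((d.star K σ e).set K σ u)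
      = Submodule.span (𝓞 K) (d.set K σ u) * Submodule.span (𝓞 K) (e.set K σ u) := by
  rw [span_set hu, span_set hu, span_set hu, star, Units.val_mul, FractionalIdeal.coe_mul]

/-- The exponent is chosen so that the window radius `|w u| ^ x` becomes
`|w u| ^ x * |w γ| = |w u| ^ (x + log_{|w u|} |w γ|)`. -/
noncomputable def scale (u : (𝓞 K)ˣ) (γ : Kˣ) (d : MIData K σ) : MIData K σ :=
  ⟨toPrincipalIdeal (𝓞 K) K γ * d.I,
    fun w => d.x w
      + Real.logb ((w : InfinitePlace K) ((u : 𝓞 K) : K)) ((w : InfinitePlace K) γ),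
    d.b⟩

theorem smul_set {u : (𝓞 K)ˣ}
    (hu : ∀ w : InfinitePlace K, w ≠ σ → w ((u : 𝓞 K) : K) ≠ 1) (γ : Kˣ) (d : MIData K σ) :
    γ • d.set K σ u = (d.scale u γ).set K σ u := by
  have hu0 : ((u : 𝓞 K) : K) ≠ 0 := by exact_mod_cast u.ne_zero
  ext α
  rw [Set.mem_smul_set_iff_inv_smul_mem]
  have hmem : γ⁻¹ • α ∈ (d.I : FractionalIdeal (𝓞 K)⁰ K)
      ↔ α ∈ ((d.scale u γ).I : FractionalIdeal (𝓞 K)⁰ K) := by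
    rw [scale, Units.val_mul, coe_toPrincipalIdeal, FractionalIdeal.mem_singleton_mul]
    constructor
    · intro h
      exact ⟨_, h, by simp [Units.smul_def]⟩
    · rintro ⟨y, hy, rfl⟩
      simpa [Units.smul_def] using hy
  refine and_congr hmem (forall_congr' fun w => ?_)
  have hupos : 0 < (w : InfinitePlace K) ((u : 𝓞 K) : K) := InfinitePlace.pos_iff.mpr hu0
  have hγpos : 0 < (w : InfinitePlace K) γ := InfinitePlace.pos_iff.mpr γ.ne_zero
  have hradius : ((w : InfinitePlace K) ((u : 𝓞 K) : K)) ^ ((d.scale u γ).x w)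
      = ((w : InfinitePlace K) ((u : 𝓞 K) : K)) ^ (d.x w) * (w : InfinitePlace K) γ := by
    rw [scale, Real.rpow_add hupos, Real.rpow_logb hupos (hu w w.2) hγpos]
  have hval : (w : InfinitePlace K) (γ⁻¹ • α)
      = (w : InfinitePlace K) α / (w : InfinitePlace K) γ := by
    rw [Units.smul_def, smul_eq_mul, map_mul, Units.val_inv_eq_inv_val, map_inv₀, inv_mul_eq_div]
  rw [hradius, hval, show (d.scale u γ).b = d.b from rfl]
  cases d.b w <;> simp [div_le_iff₀ hγpos, div_lt_iff₀ hγpos]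

theorem I_eq_of_smul_set_eq {u : (𝓞 K)ˣ}
    (hu : ∀ w : InfinitePlace K, w ≠ σ → w ((u : 𝓞 K) : K) < 1) {d e : MIData K σ} {γ : Kˣ}
    (h : γ • d.set K σ u = e.set K σ u) : e.I = toPrincipalIdeal (𝓞 K) K γ * d.I :=
  I_eq_of_set_eq hu (h.symm.trans (d.smul_set (fun w hw => (hu w hw).ne) γ))

theorem mk_I_eq_of_equiv {u : (𝓞 K)ˣ}
    (hu : ∀ w : InfinitePlace K, w ≠ σ → w ((u : 𝓞 K) : K) < 1) {d e : MIData K σ}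
    (h : MIEquiv K σ u d e) : ClassGroup.mk K d.I = ClassGroup.mk K e.I := by
  obtain ⟨γ, hγ⟩ := h
  rw [I_eq_of_smul_set_eq hu hγ, map_mul, ClassGroup.mk_toPrincipalIdeal, one_mul]

theorem mk_I_eq_one_iff {u : (𝓞 K)ˣ}
    (hu : ∀ w : InfinitePlace K, w ≠ σ → w ((u : 𝓞 K) : K) < 1) (d : MIData K σ) :
    ClassGroup.mk K d.I = 1 ↔ ∃ e : MIData K σ, e.I = 1 ∧ MIEquiv K σ u d e := by
  constructor
  · intro h
    obtain ⟨g, hg⟩ := ClassGroup.mk_eq_one_iff_exists_toPrincipalIdeal.mp h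
    refine ⟨d.scale u g⁻¹, ?_, g⁻¹, d.smul_set (fun w hw => (hu w hw).ne) g⁻¹⟩
    rw [scale, ← hg, ← map_mul, inv_mul_cancel, map_one]
  · rintro ⟨e, he, hde⟩
    rw [mk_I_eq_of_equiv hu hde, he, map_one]

end MIData

/-- The map `𝔞 ↦ 𝔞O_K` induces a well-defined surjective epimorphism of monoids
`Φ : Cl^mod(A_σ) → Cl(K)` whose kernel is exactly the submonoid `Z` of classes of the model
ideals `𝔞^⋆_{O_K,x}`. -/
theorem stmt3 (u : (𝓞 K)ˣ) (hu : IsPVUnit K σ u) :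
    -- Φ is computed by the ideal generated by the model set: `𝔞O_K` represents `ClassGroup.mk K 𝔄`
    (∀ d : MIData K σ, ∃ J : (FractionalIdeal (𝓞 K)⁰ K)ˣ,
        ((J : FractionalIdeal (𝓞 K)⁰ K) : Submodule (𝓞 K) K)
            = Submodule.span (𝓞 K) (d.set K σ u) ∧
        ClassGroup.mk K J = ClassGroup.mk K d.I) ∧
    -- Φ is well defined on classes of model ideals
    (∀ d e : MIData K σ, MIEquiv K σ u d e → ClassGroup.mk K d.I = ClassGroup.mk K e.I) ∧
    -- Φ is a homomorphism: `(𝔞 * 𝔟)O_K = (𝔞O_K)(𝔟O_K)` up to a principal factor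
    (∀ d e : MIData K σ,
        ClassGroup.mk K ((d.star K σ e).I) = ClassGroup.mk K d.I * ClassGroup.mk K e.I ∧
        ∃ γ : Kˣ,
          ((Submodule.span (𝓞 K) ((d.star K σ e).set K σ u) : Submodule (𝓞 K) K) : Set K)
            = (γ : K) • ((Submodule.span (𝓞 K) (d.set K σ u)
                * Submodule.span (𝓞 K) (e.set K σ u) : Submodule (𝓞 K) K) : Set K)) ∧
    -- Φ is surjective
    (∀ c : ClassGroup (𝓞 K), ∃ d : MIData K σ, ClassGroup.mk K d.I = c) ∧
    -- the kernel of Φ is exactly `Z`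
    (∀ d : MIData K σ,
        ClassGroup.mk K d.I = 1 ↔ ∃ e : MIData K σ, e.I = 1 ∧ MIEquiv K σ u d e) := by
  refine ⟨fun d => ?_, fun d e => MIData.mk_I_eq_of_equiv hu.2, fun d e => ?_, fun c => ?_,
    MIData.mk_I_eq_one_iff hu.2⟩
  · exact ⟨d.I, (d.span_set hu.2).symm, rfl⟩
  · exact ⟨map_mul _ _ _, 1, by rw [MIData.span_star_set hu.2, Units.val_one, one_smul]⟩
  · obtain ⟨I, rfl⟩ := ClassGroup.mk0_surjective c
    exact ⟨⟨FractionalIdeal.mk0 K I, 0, fun _ => true⟩, ClassGroup.mk_mk0 K I⟩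
end

section
/- With the real quadratic notation: for all x₁, x₂ ∈ ℝ, the sumset 𝔞_{x₁} + 𝔞_{x₂} := {α + β : α ∈ 𝔞_{x₁}, β ∈ 𝔞_{x₂}} is exactly {γ ∈ O_K : |γ′| < θ^{−x₁} + θ^{−x₂}} = 𝔞_y with y := −log_θ(θ^{−x₁} + θ^{−x₂}). In particular, for every integer n ≥ 1 the n-fold sumset Σⁿ𝔞_x = 𝔞_x + ⋯ + 𝔞_x equals {γ ∈ O_K : |γ′| < n·θ^{−x}} = 𝔞_{x − log_θ n}. -/
open NumberField Pointwise

noncomputable section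

/-- The quasicrystals `𝔞_x = {α ∈ O_K : |α′| < θ^{-x}}` of a real quadratic field `K = ℚ(θ)`
embedded in `ℝ` by `ι`, with Galois conjugation `g`. -/
def aQC (K : Type*) [Field K] [NumberField K] (ι : K →+* ℝ) (g : K ≃+* K) (θ : ℝ) (x : ℝ) :
    Set ℝ :=
  {t : ℝ | ∃ α : 𝓞 K, ι (α : K) = t ∧ |ι (g (α : K))| < θ ^ (-x)}

/-- The `n`-fold sumset `Σⁿ S = S + ⋯ + S` of a subset of `ℝ`. -/
def sumFold (S : Set ℝ) (n : ℕ) : Set ℝ :=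
  {t : ℝ | ∃ f : Fin n → ℝ, (∀ i, f i ∈ S) ∧ t = ∑ i, f i}

private lemma exists_int_mul_mem_pos {u l r : ℝ} (hu : 0 < u) (h : u < r - l) :
    ∃ j : ℤ, l < (j : ℝ) * u ∧ (j : ℝ) * u < r := by
  refine ⟨⌊l / u⌋ + 1, ?_, ?_⟩
  · have h1 : l / u < (⌊l / u⌋ : ℝ) + 1 := Int.lt_floor_add_one (l / u)
    have := mul_lt_mul_of_pos_right h1 hu
    rw [div_mul_cancel₀ _ hu.ne'] at this
    push_cast
    linarith
  · have h2 : (⌊l / u⌋ : ℝ) ≤ l / u := Int.floor_le _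
    have := mul_le_mul_of_nonneg_right h2 hu.le
    rw [div_mul_cancel₀ _ hu.ne'] at this
    push_cast
    linarith

private lemma exists_int_mul_mem {u l r : ℝ} (hu : u ≠ 0) (h : |u| < r - l) :
    ∃ j : ℤ, l < (j : ℝ) * u ∧ (j : ℝ) * u < r := by
  rcases hu.lt_or_gt with hneg | hpos
  · obtain ⟨j, h1, h2⟩ := exists_int_mul_mem_pos (u := -u) (by linarith)
      (by rwa [abs_of_neg hneg] at h)
    refine ⟨-j, ?_, ?_⟩ <;> push_cast <;> nlinarith
  · exact exists_int_mul_mem_pos hpos (by rwa [abs_of_pos hpos] at h)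

/-- `𝔞_{x₁} + 𝔞_{x₂} = {γ ∈ O_K : |γ′| < θ^{-x₁} + θ^{-x₂}} = 𝔞_y` with
`y = -log_θ(θ^{-x₁} + θ^{-x₂})`; in particular `Σⁿ𝔞_x = {γ : |γ′| < n·θ^{-x}} = 𝔞_{x - log_θ n}`. -/
theorem stmt16 (K : Type*) [Field K] [NumberField K]
    (hdeg : Module.finrank ℚ K = 2) (ι : K →+* ℝ)
    (g : K ≃+* K) (hg : g ≠ RingEquiv.refl K)
    (θu : (𝓞 K)ˣ) (hθ : 1 < ι ((θu : 𝓞 K) : K))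
    (hfund : ∀ v : (𝓞 K)ˣ, ∃ n : ℤ, ((v : 𝓞 K) : K) = (((θu ^ n : (𝓞 K)ˣ) : 𝓞 K) : K)
      ∨ ((v : 𝓞 K) : K) = -(((θu ^ n : (𝓞 K)ˣ) : 𝓞 K) : K)) :
    -- the two-variable statement
    (∀ x₁ x₂ : ℝ,
      aQC K ι g (ι ((θu : 𝓞 K) : K)) x₁ + aQC K ι g (ι ((θu : 𝓞 K) : K)) x₂
        = {t : ℝ | ∃ α : 𝓞 K, ι (α : K) = t ∧
            |ι (g (α : K))| < (ι ((θu : 𝓞 K) : K)) ^ (-x₁) + (ι ((θu : 𝓞 K) : K)) ^ (-x₂)} ∧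
      aQC K ι g (ι ((θu : 𝓞 K) : K)) x₁ + aQC K ι g (ι ((θu : 𝓞 K) : K)) x₂
        = aQC K ι g (ι ((θu : 𝓞 K) : K))
            (-Real.logb (ι ((θu : 𝓞 K) : K))
              ((ι ((θu : 𝓞 K) : K)) ^ (-x₁) + (ι ((θu : 𝓞 K) : K)) ^ (-x₂)))) ∧
    -- the `n`-fold statement
    (∀ x : ℝ, ∀ n : ℕ, 1 ≤ n →
      sumFold (aQC K ι g (ι ((θu : 𝓞 K) : K)) x) n
        = {t : ℝ | ∃ α : 𝓞 K, ι (α : K) = t ∧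
            |ι (g (α : K))| < (n : ℝ) * (ι ((θu : 𝓞 K) : K)) ^ (-x)} ∧
      sumFold (aQC K ι g (ι ((θu : 𝓞 K) : K)) x) n
        = aQC K ι g (ι ((θu : 𝓞 K) : K)) (x - Real.logb (ι ((θu : 𝓞 K) : K)) n)) := by
  clear hfund
  classical
  set θ : ℝ := ι ((θu : 𝓞 K) : K) with hθdef
  have hθ0 : (0:ℝ) < θ := lt_trans one_pos hθ
  have hcadd : ∀ a b : 𝓞 K, ((a + b : 𝓞 K) : K) = (a : K) + (b : K) :=
    fun a b => map_add (algebraMap (𝓞 K) K) a b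
  have hcsub : ∀ a b : 𝓞 K, ((a - b : 𝓞 K) : K) = (a : K) - (b : K) :=
    fun a b => map_sub (algebraMap (𝓞 K) K) a b
  have hcmul : ∀ a b : 𝓞 K, ((a * b : 𝓞 K) : K) = (a : K) * (b : K) :=
    fun a b => map_mul (algebraMap (𝓞 K) K) a b
  have hcpow : ∀ (a : 𝓞 K) (m : ℕ), ((a ^ m : 𝓞 K) : K) = (a : K) ^ m :=
    fun a m => map_pow (algebraMap (𝓞 K) K) a m
  have hcint : ∀ j : ℤ, ((j : 𝓞 K) : K) = (j : K) :=
    fun j => map_intCast (algebraMap (𝓞 K) K) j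
  -- Step B : conjugate has absolute value θ⁻¹
  have habs : |ι (g ((θu : 𝓞 K) : K))| = θ⁻¹ := by
    have hprod : ∃ q : ℤ, (q = 1 ∨ q = -1) ∧
        ι ((θu : 𝓞 K) : K) * ι (g ((θu : 𝓞 K) : K)) = (q : ℝ) := by
      set f₁ : K →ₐ[ℚ] ℂ := (Complex.ofRealHom.comp ι).toRatAlgHom with hf₁
      set f₂ : K →ₐ[ℚ] ℂ := (Complex.ofRealHom.comp (ι.comp (g : K →+* K))).toRatAlgHom with hf₂
      have hne : f₁ ≠ f₂ := by
        intro hEq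
        apply hg
        ext x
        have hx : f₁ x = f₂ x := by rw [hEq]
        have : (ι x : ℂ) = (ι (g x) : ℂ) := hx
        have : ι x = ι (g x) := by exact_mod_cast this
        exact (ι.injective this.symm)
      have hcard : Fintype.card (K →ₐ[ℚ] ℂ) = 2 := by rw [AlgHom.card]; exact hdeg
      have huniv : (Finset.univ : Finset (K →ₐ[ℚ] ℂ)) = {f₁, f₂} := by
        symm
        apply Finset.eq_of_subset_of_card_le (Finset.subset_univ _)
        rw [Finset.card_univ, hcard, Finset.card_pair hne]
      have key : ∀ x : K, algebraMap ℚ ℂ (Algebra.norm ℚ x) = f₁ x * f₂ x := by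
        intro x
        rw [Algebra.norm_eq_prod_embeddings ℚ ℂ x, huniv, Finset.prod_pair hne]
      have hint : ∀ α : 𝓞 K, ∃ m : ℤ, algebraMap ℤ ℚ m = Algebra.norm ℚ (α : K) := by
        intro α
        exact IsIntegrallyClosed.isIntegral_iff.mp
          (Algebra.isIntegral_norm ℚ α.isIntegral_coe)
      obtain ⟨m, hm⟩ := hint (θu : 𝓞 K)
      obtain ⟨m', hm'⟩ := hint ((θu⁻¹ : (𝓞 K)ˣ) : 𝓞 K)
      have hmulO : ((θu : 𝓞 K) : K) * (((θu⁻¹ : (𝓞 K)ˣ) : 𝓞 K) : K) = 1 := by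
        have h1 : (θu : 𝓞 K) * ((θu⁻¹ : (𝓞 K)ˣ) : 𝓞 K) = 1 := θu.mul_inv
        calc ((θu : 𝓞 K) : K) * (((θu⁻¹ : (𝓞 K)ˣ) : 𝓞 K) : K)
            = (((θu : 𝓞 K) * ((θu⁻¹ : (𝓞 K)ˣ) : 𝓞 K) : 𝓞 K) : K) := (hcmul _ _).symm
          _ = ((1 : 𝓞 K) : K) := by rw [h1]
          _ = 1 := map_one (algebraMap (𝓞 K) K)
      have hmm' : m * m' = 1 := by
        have hh := congrArg (Algebra.norm ℚ) hmulO
        rw [map_mul, map_one, ← hm, ← hm', ← map_mul, eq_intCast] at hh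
        exact_mod_cast hh
      refine ⟨m, Int.eq_one_or_neg_one_of_mul_eq_one hmm', ?_⟩
      have hk := key ((θu : 𝓞 K) : K)
      rw [← hm] at hk
      have hf1v : f₁ ((θu : 𝓞 K) : K) = ((ι ((θu : 𝓞 K) : K) : ℝ) : ℂ) := rfl
      have hf2v : f₂ ((θu : 𝓞 K) : K) = ((ι (g ((θu : 𝓞 K) : K)) : ℝ) : ℂ) := rfl
      rw [hf1v, hf2v] at hk
      have : ((m : ℝ) : ℂ) = ((ι ((θu : 𝓞 K) : K) * ι (g ((θu : 𝓞 K) : K)) : ℝ) : ℂ) := by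
        push_cast at hk ⊢
        rw [← hk]
        norm_num
      exact (Complex.ofReal_inj.mp this).symm
    obtain ⟨q, hq1, hq2⟩ := hprod
    have h1 : |θ * ι (g ((θu : 𝓞 K) : K))| = 1 := by
      rw [← hθdef] at hq2
      rw [hq2]
      rcases hq1 with h | h <;> simp [h]
    rw [abs_mul, abs_of_pos hθ0] at h1
    field_simp
    linarith [h1]
  have hlt : |ι (g ((θu : 𝓞 K) : K))| < 1 := by
    rw [habs]
    exact inv_lt_one_of_one_lt₀ hθ
  have hne0 : ι (g ((θu : 𝓞 K) : K)) ≠ 0 := by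
    intro h
    rw [h, abs_zero] at habs
    exact absurd habs.symm (ne_of_gt (inv_pos.mpr hθ0))
  -- Step C : density of conjugates
  have density : ∀ l r : ℝ, l < r → ∃ α : 𝓞 K, l < ι (g (α : K)) ∧ ι (g (α : K)) < r := by
    intro l r hlr
    obtain ⟨m, hm⟩ := exists_pow_lt_of_lt_one (sub_pos.mpr hlr) hlt
    have hu0 : ι (g ((θu : 𝓞 K) : K)) ^ m ≠ 0 := pow_ne_zero _ hne0
    obtain ⟨j, hj1, hj2⟩ := exists_int_mul_mem hu0 (by rwa [abs_pow])
    refine ⟨(j : 𝓞 K) * (θu : 𝓞 K) ^ m, ?_, ?_⟩ <;>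
    · have hval : ι (g ((((j : 𝓞 K) * (θu : 𝓞 K) ^ m : 𝓞 K)) : K))
          = (j : ℝ) * (ι (g ((θu : 𝓞 K) : K))) ^ m := by
        rw [hcmul, hcpow, hcint, map_mul, map_intCast, map_pow, map_mul, map_intCast, map_pow]
      rw [hval]
      first | exact hj1 | exact hj2
  -- Step D : the two-bound sumset identity
  have main : ∀ A B : ℝ, 0 < A → 0 < B →
      {t : ℝ | ∃ α : 𝓞 K, ι (α : K) = t ∧ |ι (g (α : K))| < A} +
        {t : ℝ | ∃ α : 𝓞 K, ι (α : K) = t ∧ |ι (g (α : K))| < B} =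
      {t : ℝ | ∃ α : 𝓞 K, ι (α : K) = t ∧ |ι (g (α : K))| < A + B} := by
    intro A B hA hB
    ext t
    rw [Set.mem_add]
    constructor
    · rintro ⟨a, ⟨α, rfl, hα⟩, b, ⟨β, rfl, hβ⟩, rfl⟩
      refine ⟨α + β, by rw [hcadd, map_add], ?_⟩
      calc |ι (g (((α + β : 𝓞 K)) : K))| = |ι (g (α : K)) + ι (g (β : K))| := by
            rw [hcadd, map_add, map_add]
        _ ≤ |ι (g (α : K))| + |ι (g (β : K))| := abs_add_le _ _
        _ < A + B := add_lt_add hα hβ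
    · rintro ⟨γ, rfl, hγ⟩
      obtain ⟨hγ1, hγ2⟩ := abs_lt.mp hγ
      obtain ⟨α, hα1, hα2⟩ := density (max (-A) (ι (g (γ : K)) - B))
        (min A (ι (g (γ : K)) + B))
        (by simp only [max_lt_iff, lt_min_iff]
            exact ⟨⟨by linarith, by linarith⟩, ⟨by linarith, by linarith⟩⟩)
      have h1 : -A < ι (g (α : K)) := lt_of_le_of_lt (le_max_left _ _) hα1
      have h2 : ι (g (γ : K)) - B < ι (g (α : K)) := lt_of_le_of_lt (le_max_right _ _) hα1
      have h3 : ι (g (α : K)) < A := lt_of_lt_of_le hα2 (min_le_left _ _)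
      have h4 : ι (g (α : K)) < ι (g (γ : K)) + B := lt_of_lt_of_le hα2 (min_le_right _ _)
      have hsub : ((γ - α : 𝓞 K) : K) = (γ : K) - (α : K) := hcsub _ _
      refine ⟨ι (α : K), ⟨α, rfl, abs_lt.mpr ⟨h1, h3⟩⟩,
        ι ((γ - α : 𝓞 K) : K), ⟨γ - α, rfl, ?_⟩, ?_⟩
      · rw [hsub, map_sub, map_sub, abs_lt]
        constructor <;> linarith
      · rw [hsub, map_sub]
        ring
  constructor
  · intro x₁ x₂
    have hA : (0:ℝ) < θ ^ (-x₁) := Real.rpow_pos_of_pos hθ0 _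
    have hB : (0:ℝ) < θ ^ (-x₂) := Real.rpow_pos_of_pos hθ0 _
    have e1 : aQC K ι g θ x₁ + aQC K ι g θ x₂
        = {t : ℝ | ∃ α : 𝓞 K, ι (α : K) = t ∧ |ι (g (α : K))| < θ ^ (-x₁) + θ ^ (-x₂)} := by
      have := main (θ ^ (-x₁)) (θ ^ (-x₂)) hA hB
      simp only [aQC]
      exact this
    refine ⟨e1, ?_⟩
    rw [e1]
    have e2 : θ ^ (-(-Real.logb θ (θ ^ (-x₁) + θ ^ (-x₂)))) = θ ^ (-x₁) + θ ^ (-x₂) := by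
      rw [neg_neg, Real.rpow_logb hθ0 hθ.ne' (by positivity)]
    simp only [aQC]
    rw [e2]
  · intro x n hn
    have hA : (0:ℝ) < θ ^ (-x) := Real.rpow_pos_of_pos hθ0 _
    have hfold : sumFold (aQC K ι g θ x) n
        = {t : ℝ | ∃ α : 𝓞 K, ι (α : K) = t ∧ |ι (g (α : K))| < (n : ℝ) * θ ^ (-x)} := by
      induction n, hn using Nat.le_induction with
      | base =>
        have h1 : sumFold (aQC K ι g θ x) 1 = aQC K ι g θ x := by
          ext t
          simp only [sumFold, Set.mem_setOf_eq]
          constructor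
          · rintro ⟨f, hf, rfl⟩
            rw [Fin.sum_univ_one]
            exact hf 0
          · intro ht
            exact ⟨fun _ => t, fun _ => ht, by rw [Fin.sum_univ_one]⟩
        rw [h1]
        simp only [aQC, Nat.cast_one, one_mul]
      | succ n hn ih =>
        have hstep : sumFold (aQC K ι g θ x) (n + 1)
            = sumFold (aQC K ι g θ x) n + aQC K ι g θ x := by
          ext t
          rw [Set.mem_add]
          simp only [sumFold, Set.mem_setOf_eq]
          constructor
          · rintro ⟨f, hf, rfl⟩
            exact ⟨∑ i : Fin n, f i.castSucc, ⟨fun i => f i.castSucc, fun i => hf _, rfl⟩,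
              f (Fin.last n), hf _, (Fin.sum_univ_castSucc f).symm⟩
          · rintro ⟨a, ⟨f, hf, rfl⟩, b, hb, rfl⟩
            refine ⟨Fin.snoc f b, ?_, ?_⟩
            · intro i
              refine Fin.lastCases ?_ ?_ i
              · rw [Fin.snoc_last]; exact hb
              · intro i; rw [Fin.snoc_castSucc]; exact hf i
            · rw [Fin.sum_univ_castSucc]
              simp only [Fin.snoc_castSucc, Fin.snoc_last]
        have hnA : (0:ℝ) < (n : ℝ) * θ ^ (-x) := by
          have : (0:ℝ) < (n : ℝ) := by exact_mod_cast hn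
          positivity
        rw [hstep, ih]
        have := main ((n : ℝ) * θ ^ (-x)) (θ ^ (-x)) hnA hA
        simp only [aQC]
        rw [this]
        have hcast : ((n + 1 : ℕ) : ℝ) * θ ^ (-x) = (n : ℝ) * θ ^ (-x) + θ ^ (-x) := by
          push_cast
          ring
        rw [hcast]
    refine ⟨hfold, ?_⟩
    rw [hfold]
    have hn0 : (0:ℝ) < (n : ℝ) := by exact_mod_cast hn
    have e3 : θ ^ (-(x - Real.logb θ (n : ℝ))) = (n : ℝ) * θ ^ (-x) := by
      rw [show -(x - Real.logb θ (n : ℝ)) = Real.logb θ (n : ℝ) + (-x) by ring,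
        Real.rpow_add hθ0, Real.rpow_logb hθ0 hθ.ne' hn0]
    simp only [aQC]
    rw [e3]
end
end

section
/- Fix a nonprincipal ultrafilter 𝔲 on ℕ and, for a set X, let *X := X^ℕ/𝔲 denote its ultrapower (two sequences being identified when they agree on a set in 𝔲). With the real quadratic notation, let *A ⊆ *O_K ⊆ *K be the ultrapowers of A ⊆ O_K ⊆ K (so *K is a field), and let ⟨*A⟩ := ⋃_{n≥1}(*A + ⋯ + *A) (the union over n of the n-fold sumsets of *A), which is a subring of *K. Then the field of fractions of ⟨*A⟩ inside *K is all of *K: every element of *K can be written as a/b with a, b ∈ ⟨*A⟩ and b ≠ 0. -/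
/-!
Every `x ∈ K` is `a / b` with `a, b ∈ 𝓞 K`. Since `θ θ' = ±1` and `θ > 1`, we have `|θ'| < 1`, so
multiplying `a` and `b` by a large power of `θ` brings both into `A`: already `K = {a / b : a, b ∈ A}`.
Choosing such a representation coordinatewise writes every element of `*K` as a quotient of two
elements of `*A ⊆ ⟨*A⟩`.
-/

open NumberField Filter

noncomputable section

/-- The `n`-fold sumset `S + ⋯ + S` in an additive commutative monoid. -/
def sumFoldM {M : Type*} [AddCommMonoid M] (S : Set M) (n : ℕ) : Set M :=
  {t : M | ∃ f : Fin n → M, (∀ i, f i ∈ S) ∧ t = ∑ i, f i}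

/-- The ultrapower `*S ⊆ *K` of a subset `S ⊆ K` along the ultrafilter `𝔲`. -/
def starSet {K : Type*} (𝔲 : Ultrafilter ℕ) (S : Set K) : Set (Filter.Germ (𝔲 : Filter ℕ) K) :=
  {z : Filter.Germ (𝔲 : Filter ℕ) K |
    ∃ u : ℕ → K, (∀ᶠ n in (𝔲 : Filter ℕ), u n ∈ S) ∧ z = (u : Filter.Germ (𝔲 : Filter ℕ) K)}

/-- The quasicrystalline ring `A = {α ∈ O_K : |α′| ≤ 1}` of a real quadratic field, as a
subset of `K`. -/
def Aqc (K : Type*) [Field K] [NumberField K] (ι : K →+* ℝ) (g : K ≃+* K) : Set K :=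
  {β : K | ∃ α : 𝓞 K, (α : K) = β ∧ |ι (g (α : K))| ≤ 1}

/-- The subring `⟨*A⟩ = ⋃_{n≥1} (*A + ⋯ + *A)` of `*K` generated by the ultrapower of the
quasicrystalline ring `A`. -/
def starRingGen (K : Type*) [Field K] [NumberField K] (ι : K →+* ℝ) (g : K ≃+* K)
    (𝔲 : Ultrafilter ℕ) : Set (Filter.Germ (𝔲 : Filter ℕ) K) :=
  ⋃ n : ℕ, ⋃ _ : 1 ≤ n, sumFoldM (starSet 𝔲 (Aqc K ι g)) n

lemma subset_sumFoldM_one {M : Type*} [AddCommMonoid M] (S : Set M) :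
    S ⊆ sumFoldM S 1 :=
  fun x hx => ⟨fun _ => x, fun _ => hx, by simp⟩

lemma starSet_subset_starRingGen {K : Type*} [Field K] [NumberField K] {ι : K →+* ℝ}
    {g : K ≃+* K} {𝔲 : Ultrafilter ℕ} : starSet 𝔲 (Aqc K ι g) ⊆ starRingGen K ι g 𝔲 :=
  fun _ hz => Set.mem_biUnion (le_refl 1) (subset_sumFoldM_one _ hz)

lemma starSet_exists_eq_div {K : Type*} [Field K] (𝔲 : Ultrafilter ℕ) {S : Set K}
    (hS : ∀ x : K, ∃ a ∈ S, ∃ b ∈ S, b ≠ 0 ∧ x = a / b) (z : Germ (𝔲 : Filter ℕ) K) :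
    ∃ a ∈ starSet 𝔲 S, ∃ b ∈ starSet 𝔲 S, b ≠ 0 ∧ z = a / b := by
  induction z using Germ.inductionOn with
  | h u =>
  choose a ha b hb hb0 hab using fun n => hS (u n)
  refine ⟨a, ⟨a, .of_forall ha, rfl⟩, b, ⟨b, .of_forall hb, rfl⟩, ?_, ?_⟩
  · exact fun h => (Germ.coe_eq.mp h).exists.elim fun n hn => hb0 n hn
  · rw [← Germ.coe_div, Germ.coe_eq]
    exact .of_forall hab

lemma Algebra.norm_eq_mul_of_finrank_eq_two {F L : Type*} [Field F] [Field L] [Algebra F L]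
    [Algebra.IsSeparable F L] (h : Module.finrank F L = 2) {σ : Gal(L/F)} (hσ : σ ≠ 1) (x : L) :
    algebraMap F L (Algebra.norm F x) = x * σ x := by
  classical
  have : IsQuadraticExtension F L := ⟨h⟩
  have hcard : Fintype.card Gal(L/F) = 2 := by
    rw [← Nat.card_eq_fintype_card, IsGalois.card_aut_eq_finrank, h]
  have huniv : (Finset.univ : Finset Gal(L/F)) = {1, σ} := by
    refine (Finset.eq_univ_of_card _ ?_).symm
    rw [Finset.card_pair hσ.symm, hcard]
  rw [Algebra.norm_eq_prod_automorphisms, huniv, Finset.prod_pair hσ.symm, AlgEquiv.one_apply]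

section RealQuadratic

variable {K : Type*} [Field K] [NumberField K]

lemma abs_conj_unit_lt_one (hdeg : Module.finrank ℚ K = 2) (ι : K →+* ℝ) {g : K ≃+* K}
    (hg : g ≠ RingEquiv.refl K) {θ : (𝓞 K)ˣ} (hθ : 1 < ι ((θ : 𝓞 K) : K)) :
    |ι (g ((θ : 𝓞 K) : K))| < 1 := by
  have hσ : g.toRatAlgEquiv ≠ 1 := fun h => hg (RingEquiv.ext (AlgEquiv.ext_iff.mp h))
  have hnorm : |ι ((θ : 𝓞 K) : K)| * |ι (g ((θ : 𝓞 K) : K))| = 1 := by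
    rw [← abs_mul, ← map_mul, ← RingEquiv.coe_toRatAlgEquiv,
      ← Algebra.norm_eq_mul_of_finrank_eq_two hdeg hσ, eq_ratCast (algebraMap ℚ K), map_ratCast,
      ← Rat.cast_abs, NumberField.Units.norm, Rat.cast_one]
  rw [abs_of_pos (one_pos.trans hθ)] at hnorm
  nlinarith [abs_nonneg (ι (g ((θ : 𝓞 K) : K)))]

variable (ι : K →+* ℝ) (g : K ≃+* K) {θ : (𝓞 K)ˣ}

lemma eventually_mul_pow_mem_Aqc (hθ : |ι (g ((θ : 𝓞 K) : K))| < 1) (x : 𝓞 K) :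
    ∀ᶠ m in atTop, (x : K) * ((θ : 𝓞 K) : K) ^ m ∈ Aqc K ι g := by
  have hlim : Tendsto (fun m : ℕ => |ι (g x)| * |ι (g ((θ : 𝓞 K) : K))| ^ m) atTop (nhds 0) := by
    simpa using (tendsto_pow_atTop_nhds_zero_of_lt_one (abs_nonneg _) hθ).const_mul |ι (g x)|
  filter_upwards [hlim.eventually (Iic_mem_nhds zero_lt_one)] with m hm
  refine ⟨x * (θ : 𝓞 K) ^ m, by push_cast; rfl, ?_⟩
  simpa [abs_mul, abs_pow] using Set.mem_Iic.mp hm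

lemma exists_eq_div_mem_Aqc (hθ : |ι (g ((θ : 𝓞 K) : K))| < 1) (x : K) :
    ∃ a ∈ Aqc K ι g, ∃ b ∈ Aqc K ι g, b ≠ 0 ∧ x = a / b := by
  obtain ⟨a, b, hb, rfl⟩ := IsFractionRing.div_surjective (A := 𝓞 K) x
  obtain ⟨m, ham, hbm⟩ :=
    ((eventually_mul_pow_mem_Aqc ι g hθ a).and (eventually_mul_pow_mem_Aqc ι g hθ b)).exists
  have hθm : ((θ : 𝓞 K) : K) ^ m ≠ 0 := pow_ne_zero _ (by simp)
  refine ⟨_, ham, _, hbm, mul_ne_zero ?_ hθm, (mul_div_mul_right _ _ hθm).symm⟩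
  exact_mod_cast nonZeroDivisors.ne_zero hb

end RealQuadratic

theorem stmt17_general (K : Type*) [Field K] [NumberField K]
    (hdeg : Module.finrank ℚ K = 2) (ι : K →+* ℝ)
    (g : K ≃+* K) (hg : g ≠ RingEquiv.refl K)
    (θu : (𝓞 K)ˣ) (hθ : 1 < ι ((θu : 𝓞 K) : K))
    (𝔲 : Ultrafilter ℕ) :
    ∀ z : Filter.Germ (𝔲 : Filter ℕ) K,
      ∃ a ∈ starRingGen K ι g 𝔲, ∃ b ∈ starRingGen K ι g 𝔲, b ≠ 0 ∧ z = a / b := by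
  intro z
  have hA := exists_eq_div_mem_Aqc ι g (abs_conj_unit_lt_one hdeg ι hg hθ)
  obtain ⟨a, ha, b, hb, hb0, rfl⟩ := starSet_exists_eq_div 𝔲 hA z
  exact ⟨a, starSet_subset_starRingGen ha, b, starSet_subset_starRingGen hb, hb0, rfl⟩

/-- `Frac(⟨*A⟩) = *K`: every element of the ultrapower `*K` is a quotient of two elements
of the ring generated by `*A`. -/
theorem stmt17 (K : Type*) [Field K] [NumberField K]
    (hdeg : Module.finrank ℚ K = 2) (ι : K →+* ℝ)
    (g : K ≃+* K) (hg : g ≠ RingEquiv.refl K)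
    (θu : (𝓞 K)ˣ) (hθ : 1 < ι ((θu : 𝓞 K) : K))
    (hfund : ∀ v : (𝓞 K)ˣ, ∃ n : ℤ, ((v : 𝓞 K) : K) = (((θu ^ n : (𝓞 K)ˣ) : 𝓞 K) : K)
      ∨ ((v : 𝓞 K) : K) = -(((θu ^ n : (𝓞 K)ˣ) : 𝓞 K) : K))
    (𝔲 : Ultrafilter ℕ) (h𝔲 : (𝔲 : Filter ℕ) ≤ Filter.cofinite) :
    ∀ z : Filter.Germ (𝔲 : Filter ℕ) K,
      ∃ a ∈ starRingGen K ι g 𝔲, ∃ b ∈ starRingGen K ι g 𝔲, b ≠ 0 ∧ z = a / b :=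
  stmt17_general K hdeg ι g hg θu hθ 𝔲
end
end
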